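/- Let T be a semi-standard Young tableau of shape λ and content μ with entries in {1 < ... < n < n̄ < ... < 1̄}, satisfying the row-entry restriction ((i,j) = 0 unless i = j or i = k̄, k < j) and whose word w(T) has the cancellation property. Then w(T) is dominant (i.e., T ∈ domres(λ,μ)) if and only if for every 1 ≤ i ≤ n−1 and every i ≤ l ≤ n: (i,i) − (i+1,i+1) − Σ_{k=i}^{l} [(ī,k) − ((i+1)-bar, k−1)] ≥ 0. -/

import Mathlib

/-!
Fix `i`, read the word column by column from the right, and let `D` be `a_{i+1} - a_i` on a
prefix. In a column the letters `i < i+1 < (i+1)‾ < ī` occur at most once and in this order, so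
the top part of a column adds to `D` at most `max 0` of what the whole column adds: only prefixes
made of whole columns matter.

By the row restriction, `j` fills the first `(j,j)` boxes of row `j`, and `ī` lies below row `i`.
If `x` is the leftmost column of `ī` in row `r`, the columns `≥ x` contain exactly the `ī` of the
rows `≤ r` and the `(i+1)‾` of the rows `< r`, so on them `D = max(x - (i+1,i+1), 0) - E_r`, where
`E_r` is the left-hand side of the `r`-th inequality. Dominance thus gives `E_r ≥ 0` for the rows
containing `ī`, and `E_l` only grows across the other rows. Conversely, for the columns `≥ c`: a
column without `ī`, or beyond the `(i+1)`-segment, adds `≤ 0`; if column `c` has an `ī` in row `r`,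
the columns from the leftmost `ī` of that row up to `c` all add `≥ 0`, so `D ≤ -E_r ≤ 0`.

The condition `a_n ≥ 0` comes from cancellation: the word ends with the bottom letter of the first
column, which therefore is unbarred, so the rows `≥ n` (which hold only barred letters) are empty.
-/

open scoped BigOperators

/-- The ordered alphabet `C_n = {1 < ⋯ < n < n̄ < ⋯ < 1̄}`.  `Sum.inl i` denotes the
unbarred letter `i+1` and `Sum.inr i` the barred letter `(i+1)‾` (0-indexed). -/
abbrev Letter (n : ℕ) := Fin n ⊕ Fin n

/-- Position of a letter in the total order `1 < ⋯ < n < n̄ < ⋯ < 1̄`. -/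
def Letter.idx {n : ℕ} : Letter n → ℕ
  | Sum.inl i => (i : ℕ)
  | Sum.inr i => 2 * n - 1 - (i : ℕ)

/-- A semi-standard Young tableau with entries in the alphabet `C_n`,
encoded by its row lengths (the shape) and its entries. -/
structure SSYT (n : ℕ) where
  rowLen : ℕ → ℕ
  entry : ℕ → ℕ → Option (Letter n)
  shape_antitone : ∀ r, rowLen (r + 1) ≤ rowLen r
  rows_bounded : ∀ r, 2 * n ≤ r → rowLen r = 0
  entry_isSome_iff : ∀ r c, (entry r c).isSome ↔ c < rowLen r
  rows_weak : ∀ r c₁ c₂ l₁ l₂, c₁ ≤ c₂ → entry r c₁ = some l₁ → entry r c₂ = some l₂ →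
    l₁.idx ≤ l₂.idx
  cols_strict : ∀ r₁ r₂ c l₁ l₂, r₁ < r₂ → entry r₁ c = some l₁ → entry r₂ c = some l₂ →
    l₁.idx < l₂.idx

namespace SSYT

variable {n : ℕ}

/-- The positions of the boxes of `T` in reading order of the word `w(T)`:
columns right to left, each column top to bottom. -/
def posList (T : SSYT n) : List (ℕ × ℕ) :=
  ((List.range (T.rowLen 0)).reverse).flatMap fun c =>
    (List.range (2 * n)).filterMap fun r =>
      if c < T.rowLen r then some (r, c) else none

/-- The word `w(T)` of the tableau, read right to left and top to bottom. -/
def word (T : SSYT n) : List (Letter n) :=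
  T.posList.filterMap fun p => T.entry p.1 p.2

/-- The far-eastern word `w'(T)`: rows read right to left, top to bottom. -/
def wordFE (T : SSYT n) : List (Letter n) :=
  (List.range (2 * n)).flatMap fun r =>
    ((List.range (T.rowLen r)).reverse).filterMap fun c => T.entry r c

/-- `(i,j)`: the number of occurrences of the letter `l` in row `r` of `T`. -/
def count (T : SSYT n) (l : Letter n) (r : ℕ) : ℕ :=
  ((List.range (T.rowLen r)).filter fun c => T.entry r c = some l).length

end SSYT

/-- The cancellation property of a word: every barred letter `ī` has an unbarred `i`
strictly to its right. -/
def Cancel {n : ℕ} (w : List (Letter n)) : Prop :=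
  ∀ (p : ℕ) (i : Fin n), w[p]? = some (Sum.inr i) →
    ∃ q, p < q ∧ w[q]? = some (Sum.inl i)

/-- The weight of a letter: `i` contributes `+ε_i`, `ī` contributes `-ε_i`. -/
def wt {n : ℕ} (l : Letter n) (j : ℕ) : ℤ :=
  match l with
  | Sum.inl i => if (i : ℕ) = j then 1 else 0
  | Sum.inr i => if (i : ℕ) = j then -1 else 0

/-- The `j`-th coordinate of the weight of a word. -/
def wsum {n : ℕ} (w : List (Letter n)) (j : ℕ) : ℤ := (w.map fun l => wt l j).sum

/-- A word is dominant if every prefix has dominant weight `a₁ ≥ a₂ ≥ ⋯ ≥ a_n ≥ 0`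
(coordinates `j ≥ n` of `wsum` vanish, so this includes `a_n ≥ 0`). -/
def Dominant {n : ℕ} (w : List (Letter n)) : Prop :=
  ∀ k j, wsum (w.take k) (j + 1) ≤ wsum (w.take k) j

/-- `domres(λ, μ)`: semi-standard Young tableaux of shape `λ`, word weight `μ`,
whose word is dominant. -/
def domresSet (n : ℕ) (lam mu : ℕ → ℕ) : Set (SSYT n) :=
  {T | T.rowLen = lam ∧ (∀ j, wsum T.word j = (mu j : ℤ)) ∧ Dominant T.word}

/-- The row-entry restriction: row `r` (0-indexed) contains only the unbarred letter `r`
and barred letters `k̄` with `k < r`. -/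
def RowRestriction {n : ℕ} (T : SSYT n) : Prop :=
  ∀ (r : ℕ) (l : Letter n), T.count l r ≠ 0 →
    (∃ h : r < n, l = Sum.inl ⟨r, h⟩) ∨ (∃ k : Fin n, (k : ℕ) < r ∧ l = Sum.inr k)

open Finset

/-- Core derives `BEq` for `Sum` without a `LawfulBEq` instance, which membership in lists of
letters needs in order to be decidable. -/
instance {α β : Type*} [BEq α] [BEq β] [LawfulBEq α] [LawfulBEq β] : LawfulBEq (α ⊕ β) where
  eq_of_beq {a b} h := by
    rcases a with a | a <;> rcases b with b | b
    · exact congrArg _ (eq_of_beq (α := α) h)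
    · exact absurd h Bool.false_ne_true
    · exact absurd h Bool.false_ne_true
    · exact congrArg _ (eq_of_beq (α := β) h)
  rfl {a} := by
    rcases a with a | a
    · exact beq_self_eq_true (α := α) a
    · exact beq_self_eq_true (α := β) a

theorem Finset.lt_card_filter_range_iff {p : ℕ → Prop} [DecidablePred p] (hp : Antitone p)
    {N c : ℕ} (hc : c < N) : c < #{x ∈ Finset.range N | p x} ↔ p c := by
  constructor
  · intro hlt
    by_contra hpc
    have : {x ∈ Finset.range N | p x} ⊆ Finset.range c := fun x hx => by
      simp only [Finset.mem_filter, Finset.mem_range] at hx ⊢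
      by_contra! hxc
      exact hpc (hp hxc hx.2)
    have := Finset.card_le_card this
    simp only [Finset.card_range] at this
    omega
  · intro hpc
    have : Finset.range (c + 1) ⊆ {x ∈ Finset.range N | p x} := fun x hx => by
      simp only [Finset.mem_filter, Finset.mem_range] at hx ⊢
      exact ⟨by omega, hp (by omega) hpc⟩
    simpa using Finset.card_le_card this

theorem Finset.sum_Icc_sub_one {M : Type*} [AddCommMonoid M] (f : ℕ → M) {a b : ℕ} (h : a ≤ b) :
    ∑ k ∈ Finset.Icc a b, f (k - 1) = f (a - 1) + ∑ k ∈ Finset.Ico a b, f k := by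
  induction b, h using Nat.le_induction with
  | base => simp
  | succ b hab ih =>
    rw [Finset.sum_Icc_succ_top (by omega), ih, Finset.sum_Ico_succ_top hab, add_assoc,
      Nat.add_sub_cancel]

theorem List.sum_map_take_reverse_range {M : Type*} [AddCommMonoid M] (f : ℕ → M) (N a : ℕ) :
    ((((List.range N).reverse.take a).map f).sum) = ∑ c ∈ Finset.Ico (N - a) N, f c := by
  rw [List.take_reverse, List.length_range, List.range_eq_range', List.drop_range',
    List.map_reverse, List.sum_reverse, Finset.sum_eq_multiset_sum]
  simp only [zero_add, mul_one]
  rfl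

theorem List.take_flatten_nonpos {α : Type*} (F : List α → ℤ)
    (hF : ∀ u v, F (u ++ v) = F u + F v) (L : List (List α)) (d : ℤ)
    (hblocks : ∀ a, d + F (L.take a).flatten ≤ 0)
    (hprefix : ∀ B ∈ L, ∀ m, F (B.take m) ≤ max 0 (F B)) (k : ℕ) :
    d + F (L.flatten.take k) ≤ 0 := by
  have hnil : F [] = 0 := by simpa using hF [] []
  induction L generalizing d k with
  | nil => simpa [hnil] using hblocks 0
  | cons B L ih =>
    rw [List.flatten_cons, List.take_append, hF]
    rcases le_or_gt k B.length with hk | hk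
    · have h0 := hblocks 0
      have h1 := hblocks 1
      have := hprefix B List.mem_cons_self k
      simp only [List.take_zero, List.flatten_nil, hnil, List.take_succ_cons,
        List.flatten_cons, List.append_nil] at h0 h1
      rw [Nat.sub_eq_zero_of_le hk, List.take_zero, hnil]
      omega
    · rw [List.take_of_length_le hk.le, ← add_assoc]
      refine ih (d + F B) (fun a => ?_) (fun B' hB' => hprefix B' (List.mem_cons_of_mem _ hB')) _
      simpa [hF, add_assoc] using hblocks (a + 1)

@[simp] theorem Letter.idx_inl {n : ℕ} (i : Fin n) : Letter.idx (Sum.inl i : Letter n) = i := rfl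

@[simp] theorem Letter.idx_inr {n : ℕ} (i : Fin n) :
    Letter.idx (Sum.inr i : Letter n) = 2 * n - 1 - i :=
  rfl

theorem Letter.idx_injective {n : ℕ} : Function.Injective (Letter.idx (n := n)) := by
  rintro (a | a) (b | b) h <;> simp only [Letter.idx_inl, Letter.idx_inr] at h <;>
    have := a.isLt <;> have := b.isLt
  · exact congrArg _ (Fin.ext h)
  · omega
  · omega
  · exact congrArg _ (Fin.ext (by omega))

theorem wt_eq {n : ℕ} (l : Letter n) {j : ℕ} (hj : j < n) :
    wt l j = (if l = Sum.inl ⟨j, hj⟩ then 1 else 0) - (if l = Sum.inr ⟨j, hj⟩ then 1 else 0) := by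
  rcases l with i | i <;> simp only [wt, Sum.inl.injEq, Sum.inr.injEq, reduceCtorEq, Fin.ext_iff,
    eq_comm (a := (i : ℕ))] <;> split_ifs <;> simp_all

theorem wsum_append {n : ℕ} (u v : List (Letter n)) (j : ℕ) :
    wsum (u ++ v) j = wsum u j + wsum v j := by
  simp [wsum]

theorem wsum_eq_zero_of_le {n : ℕ} (w : List (Letter n)) {j : ℕ} (hj : n ≤ j) : wsum w j = 0 :=
  List.sum_eq_zero fun x hx => by
    obtain ⟨l, -, rfl⟩ := List.mem_map.1 hx
    rcases l with i | i <;> simp only [wt] <;> rw [if_neg (by omega)]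

theorem wsum_eq_of_nodup {n : ℕ} {w : List (Letter n)} (hw : w.Nodup) {j : ℕ} (hj : j < n) :
    wsum w j = (if Sum.inl ⟨j, hj⟩ ∈ w then 1 else 0) - (if Sum.inr ⟨j, hj⟩ ∈ w then 1 else 0) := by
  rw [wsum, ← List.sum_toFinset _ hw]
  simp [wt_eq _ hj, Finset.sum_sub_distrib]

def wgap {n : ℕ} (i : ℕ) (w : List (Letter n)) : ℤ := wsum w (i + 1) - wsum w i

theorem wgap_append {n : ℕ} (i : ℕ) (u v : List (Letter n)) :
    wgap i (u ++ v) = wgap i u + wgap i v := by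
  simp only [wgap, wsum_append]
  ring

theorem wgap_flatten {n : ℕ} (i : ℕ) (L : List (List (Letter n))) :
    wgap i L.flatten = (L.map (wgap i)).sum := by
  induction L with
  | nil => simp [wgap, wsum]
  | cons B L ih => rw [List.flatten_cons, wgap_append, ih, List.map_cons, List.sum_cons]

theorem wgap_eq_of_nodup {n : ℕ} {w : List (Letter n)} (hw : w.Nodup) {i : ℕ} (hi : i + 1 < n) :
    wgap i w = (if Sum.inl ⟨i + 1, hi⟩ ∈ w then 1 else 0)
      - (if Sum.inr ⟨i + 1, hi⟩ ∈ w then 1 else 0)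
      - (if Sum.inl ⟨i, Nat.lt_of_succ_lt hi⟩ ∈ w then 1 else 0)
      + (if Sum.inr ⟨i, Nat.lt_of_succ_lt hi⟩ ∈ w then 1 else 0) := by
  rw [wgap, wsum_eq_of_nodup hw hi, wsum_eq_of_nodup hw (Nat.lt_of_succ_lt hi)]
  ring

theorem Cancel.not_append_inr {n : ℕ} {w : List (Letter n)} {k : Fin n} :
    ¬ Cancel (w ++ [Sum.inr k]) := fun hc => by
  obtain ⟨q, hq, hq'⟩ := hc w.length k List.getElem?_concat_length
  have := (List.getElem?_eq_some_iff.1 hq').1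
  simp only [List.length_append, List.length_singleton] at this
  omega

namespace SSYT

variable {n : ℕ} {T : SSYT n} {i r r' c c' x : ℕ} {l l' : Letter n}

theorem rowLen_antitone : Antitone T.rowLen := antitone_nat_of_succ_le T.shape_antitone

theorem lt_rowLen_of_entry (h : T.entry r c = some l) : c < T.rowLen r :=
  (T.entry_isSome_iff r c).1 (by simp [h])

theorem exists_entry_of_lt_rowLen (h : c < T.rowLen r) : ∃ l, T.entry r c = some l :=
  Option.isSome_iff_exists.1 ((T.entry_isSome_iff r c).2 h)

theorem row_lt_of_entry (h : T.entry r c = some l) : r < 2 * n := by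
  by_contra! hr
  have := T.rows_bounded r hr
  have := lt_rowLen_of_entry h
  omega

theorem row_lt_of_entry_of_rowLen_eq_zero {m : ℕ} (hm : T.rowLen m = 0)
    (h : T.entry r c = some l) : r < m := by
  by_contra! hr
  have := (lt_rowLen_of_entry h).trans_le (rowLen_antitone hr)
  omega

theorem count_le_rowLen : T.count l r ≤ T.rowLen r :=
  (List.length_filter_le _ _).trans (List.length_range).le

theorem count_ne_zero_iff : T.count l r ≠ 0 ↔ ∃ c, T.entry r c = some l := by
  simp only [count, ← List.countP_eq_length_filter, ne_eq, List.countP_eq_zero, not_forall,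
    List.mem_range, decide_eq_true_eq, not_not]
  exact ⟨fun ⟨c, _, h⟩ => ⟨c, h⟩, fun ⟨c, h⟩ => ⟨c, lt_rowLen_of_entry h, h⟩⟩

theorem idx_lt_of_entry (h : T.entry r c = some l) (h' : T.entry r' c' = some l')
    (hr : r < r') (hc : c ≤ c') : l.idx < l'.idx := by
  obtain ⟨m, hm⟩ := exists_entry_of_lt_rowLen
    ((lt_rowLen_of_entry h').trans_le (rowLen_antitone hr.le))
  exact (T.rows_weak r c c' l m hc h hm).trans_lt (T.cols_strict r r' c' m l' hr hm h')

theorem idx_le_of_entry (h : T.entry r c = some l) (h' : T.entry r' c' = some l')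
    (hr : r ≤ r') (hc : c ≤ c') : l.idx ≤ l'.idx := by
  rcases hr.eq_or_lt with rfl | hr
  · exact T.rows_weak r c c' l l' hc h h'
  · exact (idx_lt_of_entry h h' hr hc).le

theorem col_lt_of_row_lt (h : T.entry r c = some l) (h' : T.entry r' c' = some l)
    (hr : r < r') : c' < c := by
  by_contra! hc
  exact (idx_lt_of_entry h h' hr hc).false

theorem le_col_of_leftmost (hx : T.entry r x = some l)
    (hxmin : ∀ c < x, T.entry r c ≠ some l) (h' : T.entry r' c' = some l') (hr : r' < r)
    (hl : l'.idx + 1 = l.idx) : x ≤ c' := by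
  by_contra! hc
  obtain ⟨m, hm⟩ := exists_entry_of_lt_rowLen
    ((Nat.sub_one_lt_of_lt hc).trans ((lt_rowLen_of_entry hx).trans_le (rowLen_antitone hr.le)))
  obtain ⟨m', hm'⟩ := exists_entry_of_lt_rowLen
    ((Nat.sub_one_lt_of_lt hc).trans (lt_rowLen_of_entry hx))
  have h₁ := T.rows_weak r' c' (x - 1) l' m (by omega) h' hm
  have h₂ := T.cols_strict r' r (x - 1) m m' hr hm hm'
  have h₃ := T.rows_weak r (x - 1) x m' l (by omega) hm' hx
  rw [Letter.idx_injective (show m'.idx = l.idx by omega)] at hm'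
  exact hxmin (x - 1) (by omega) hm'

theorem entry_eq_of_le_of_le {c₀ c₁ : ℕ} (h₀ : T.entry r c₀ = some l) (h₁ : T.entry r c₁ = some l)
    (hc₀ : c₀ ≤ c) (hc₁ : c ≤ c₁) : T.entry r c = some l := by
  obtain ⟨m, hm⟩ := exists_entry_of_lt_rowLen ((lt_rowLen_of_entry h₁).trans_le' hc₁)
  have := T.rows_weak r c₀ c l m hc₀ h₀ hm
  have := T.rows_weak r c c₁ m l hc₁ hm h₁
  rwa [Letter.idx_injective (show m.idx = l.idx by omega)] at hm

theorem exists_leftmost_entry (h : T.entry r c = some l) :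
    ∃ x ≤ c, T.entry r x = some l ∧ ∀ c' < x, T.entry r c' ≠ some l := by
  classical
  have hex : ∃ x, T.entry r x = some l := ⟨c, h⟩
  exact ⟨Nat.find hex, Nat.find_min' hex h, Nat.find_spec hex, fun _ => Nat.find_min hex⟩

theorem entry_cases (hrr : RowRestriction T) (h : T.entry r c = some l) :
    (∃ hr : r < n, l = Sum.inl ⟨r, hr⟩) ∨ ∃ k : Fin n, (k : ℕ) < r ∧ l = Sum.inr k :=
  hrr r l (count_ne_zero_iff.2 ⟨c, h⟩)

theorem val_eq_of_entry_eq_inl (hrr : RowRestriction T) {j : Fin n}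
    (h : T.entry r c = some (Sum.inl j)) : (j : ℕ) = r := by
  rcases entry_cases hrr h with ⟨_, he⟩ | ⟨_, _, he⟩ <;> cases he
  rfl

theorem val_lt_of_entry_eq_inr (hrr : RowRestriction T) {k : Fin n}
    (h : T.entry r c = some (Sum.inr k)) : (k : ℕ) < r := by
  rcases entry_cases hrr h with ⟨_, he⟩ | ⟨_, hk, he⟩ <;> cases he
  exact hk

theorem count_inr_eq_zero (hrr : RowRestriction T) {k : Fin n} (hr : r ≤ k) :
    T.count (Sum.inr k) r = 0 := by
  by_contra h
  obtain ⟨c, hc⟩ := count_ne_zero_iff.1 h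
  exact absurd (val_lt_of_entry_eq_inr hrr hc) (by omega)

theorem entry_eq_inl_of_idx_lt (hrr : RowRestriction T) (h : T.entry r c = some l)
    (hr : r < n) (hl : l.idx < 2 * n - r) : T.entry r c = some (Sum.inl ⟨r, hr⟩) := by
  rcases entry_cases hrr h with ⟨_, rfl⟩ | ⟨k, hk, rfl⟩
  · exact h
  · simp only [Letter.idx_inr] at hl
    omega

theorem entry_eq_inl_of_entry_eq_inr (hrr : RowRestriction T) {k : Fin n}
    (h : T.entry r c = some (Sum.inr k)) {j : ℕ} (hj : j ≤ k) :
    T.entry j c = some (Sum.inl ⟨j, hj.trans_lt k.isLt⟩) := by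
  have hjr : j < r := hj.trans_lt (val_lt_of_entry_eq_inr hrr h)
  obtain ⟨m, hm⟩ := exists_entry_of_lt_rowLen
    ((lt_rowLen_of_entry h).trans_le (rowLen_antitone hjr.le))
  refine entry_eq_inl_of_idx_lt hrr hm _ ?_
  have := idx_lt_of_entry hm h hjr le_rfl
  simp only [Letter.idx_inr] at this
  omega

theorem entry_eq_inl_of_entry_succ (hrr : RowRestriction T) {j : ℕ} (hj : j + 1 < n)
    (h : T.entry (j + 1) c = some (Sum.inl ⟨j + 1, hj⟩)) :
    T.entry j c = some (Sum.inl ⟨j, Nat.lt_of_succ_lt hj⟩) := by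
  obtain ⟨m, hm⟩ := exists_entry_of_lt_rowLen
    ((lt_rowLen_of_entry h).trans_le (rowLen_antitone j.le_succ))
  refine entry_eq_inl_of_idx_lt hrr hm _ ?_
  have := idx_lt_of_entry hm h j.lt_succ_self le_rfl
  simp only [Letter.idx_inl] at this
  omega

theorem entry_eq_inl_iff_lt_count (hrr : RowRestriction T) {j : ℕ} (hj : j < n)
    (hc : c < T.rowLen j) :
    T.entry j c = some (Sum.inl ⟨j, hj⟩) ↔ c < T.count (Sum.inl ⟨j, hj⟩) j := by
  refine (Finset.lt_card_filter_range_iff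
    (p := fun c => T.entry j c = some (Sum.inl ⟨j, hj⟩)) (fun c' c hc' h => ?_) hc).symm
  obtain ⟨m, hm⟩ := exists_entry_of_lt_rowLen ((lt_rowLen_of_entry h).trans_le' hc')
  refine entry_eq_inl_of_idx_lt hrr hm hj ?_
  have := T.rows_weak j c' c m _ hc' hm h
  simp only [Letter.idx_inl] at this
  omega

theorem count_inl_succ_le (hrr : RowRestriction T) {j : ℕ} (hj : j + 1 < n) :
    T.count (Sum.inl ⟨j + 1, hj⟩) (j + 1) ≤ T.count (Sum.inl ⟨j, Nat.lt_of_succ_lt hj⟩) j := by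
  by_contra! hlt
  set b := T.count (Sum.inl ⟨j + 1, hj⟩) (j + 1)
  have hb : b - 1 < T.rowLen (j + 1) :=
    (Nat.sub_one_lt_of_lt (by omega)).trans_le count_le_rowLen
  have h := entry_eq_inl_of_entry_succ hrr hj ((entry_eq_inl_iff_lt_count hrr hj hb).2 (by omega))
  have := (entry_eq_inl_iff_lt_count hrr _ (lt_rowLen_of_entry h)).1 h
  omega

theorem lt_count_of_entry_eq_inr (hrr : RowRestriction T) {k : Fin n}
    (h : T.entry r c = some (Sum.inr k)) : c < T.count (Sum.inl k) k := by
  have hk := entry_eq_inl_of_entry_eq_inr hrr h le_rfl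
  exact (entry_eq_inl_iff_lt_count hrr k.isLt (lt_rowLen_of_entry hk)).1 hk

def colWord (T : SSYT n) (c : ℕ) : List (Letter n) :=
  (List.range (2 * n)).filterMap (T.entry · c)

def cols (T : SSYT n) : List (List (Letter n)) :=
  (List.range (T.rowLen 0)).reverse.map T.colWord

theorem word_eq_flatten_cols : T.word = T.cols.flatten := by
  rw [word, posList, List.filterMap_flatMap, cols, List.flatMap_def]
  congr 2
  funext c
  rw [List.filterMap_filterMap, colWord]
  congr 1
  funext r
  by_cases h : c < T.rowLen r
  · simp [h]
  · simp only [h, if_false, Option.bind_none]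
    exact (Option.not_isSome_iff_eq_none.1 (mt (T.entry_isSome_iff r c).1 h)).symm

theorem take_word_eq_flatten_take_cols (a : ℕ) :
    T.word.take (T.cols.take a).flatten.length = (T.cols.take a).flatten := by
  have h := congrArg List.flatten (List.take_append_drop a T.cols)
  rw [List.flatten_append] at h
  rw [word_eq_flatten_cols, ← h, List.take_left]

theorem exists_entry_of_mem_word (h : l ∈ T.word) : ∃ r c, T.entry r c = some l := by
  obtain ⟨p, _, hp⟩ := List.mem_filterMap.1 h
  exact ⟨p.1, p.2, hp⟩

theorem mem_colWord : l ∈ T.colWord c ↔ ∃ r, T.entry r c = some l := by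
  simp only [colWord, List.mem_filterMap, List.mem_range]
  exact ⟨fun ⟨r, _, h⟩ => ⟨r, h⟩, fun ⟨r, h⟩ => ⟨r, row_lt_of_entry h, h⟩⟩

theorem colWord_pairwise : (T.colWord c).Pairwise (fun l l' => l.idx < l'.idx) := by
  rw [colWord, List.pairwise_filterMap]
  exact List.pairwise_lt_range.imp fun hr _ h _ h' => T.cols_strict _ _ c _ _ hr h h'

theorem colWord_nodup : (T.colWord c).Nodup :=
  colWord_pairwise.imp fun h => fun e => h.ne (congrArg _ e)

theorem mem_colWord_inl_iff (hrr : RowRestriction T) {j : ℕ} (hj : j < n) :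
    Sum.inl ⟨j, hj⟩ ∈ T.colWord c ↔ c < T.count (Sum.inl ⟨j, hj⟩) j := by
  rw [mem_colWord]
  constructor
  · rintro ⟨r, h⟩
    obtain rfl := (val_eq_of_entry_eq_inl hrr h).symm
    exact (entry_eq_inl_iff_lt_count hrr hj (lt_rowLen_of_entry h)).1 h
  · intro h
    exact ⟨j, (entry_eq_inl_iff_lt_count hrr hj (h.trans_le count_le_rowLen)).2 h⟩

theorem mem_colWord_inl_of_inr (hrr : RowRestriction T) {k : Fin n}
    (h : Sum.inr k ∈ T.colWord c) : Sum.inl k ∈ T.colWord c := by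
  obtain ⟨r, hr⟩ := mem_colWord.1 h
  exact mem_colWord.2 ⟨k, entry_eq_inl_of_entry_eq_inr hrr hr le_rfl⟩

theorem mem_colWord_inl_of_inl_succ (hrr : RowRestriction T) (hi : i + 1 < n)
    (h : Sum.inl ⟨i + 1, hi⟩ ∈ T.colWord c) :
    Sum.inl ⟨i, Nat.lt_of_succ_lt hi⟩ ∈ T.colWord c := by
  obtain ⟨r, hr⟩ := mem_colWord.1 h
  obtain rfl := (val_eq_of_entry_eq_inl hrr hr).symm
  exact mem_colWord.2 ⟨i, entry_eq_inl_of_entry_succ hrr hi hr⟩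

theorem wgap_colWord_nonneg (hrr : RowRestriction T) (hi : i + 1 < n)
    (hv : Sum.inr ⟨i, Nat.lt_of_succ_lt hi⟩ ∈ T.colWord c) : 0 ≤ wgap i (T.colWord c) := by
  have hu := mem_colWord_inl_of_inr hrr hv
  have hv₁ := @mem_colWord_inl_of_inr _ _ c hrr ⟨i + 1, hi⟩
  rw [wgap_eq_of_nodup colWord_nodup hi]
  split_ifs <;> simp_all

theorem wgap_colWord_nonpos (hrr : RowRestriction T) (hi : i + 1 < n)
    (h : Sum.inr ⟨i, Nat.lt_of_succ_lt hi⟩ ∉ T.colWord c ∨ Sum.inl ⟨i + 1, hi⟩ ∉ T.colWord c) :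
    wgap i (T.colWord c) ≤ 0 := by
  have hu₁ := mem_colWord_inl_of_inl_succ hrr hi (c := c)
  have hv := @mem_colWord_inl_of_inr _ _ c hrr ⟨i, Nat.lt_of_succ_lt hi⟩
  have hv₁ := @mem_colWord_inl_of_inr _ _ c hrr ⟨i + 1, hi⟩
  rw [wgap_eq_of_nodup colWord_nodup hi]
  split_ifs <;> simp_all

/-- If the top segment contains `ī`, the rest of the column holds only letters `k̄` with `k < i`;
otherwise an `i+1` in it comes with the `i` above it. -/
theorem wgap_take_colWord_le (hrr : RowRestriction T) (hi : i + 1 < n) (m : ℕ) :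
    wgap i ((T.colWord c).take m) ≤ max 0 (wgap i (T.colWord c)) := by
  have hsplit := List.take_append_drop m (T.colWord c)
  have hcross := (List.pairwise_append.1 (hsplit ▸ colWord_pairwise (c := c) (T := T))).2.2
  have hq := colWord_nodup.sublist (List.take_sublist m (T.colWord c))
  by_cases hv : Sum.inr ⟨i, Nat.lt_of_succ_lt hi⟩ ∈ (T.colWord c).take m
  · have hs : wgap i ((T.colWord c).drop m) = 0 := by
      have hnot : ∀ l, l.idx ≤ 2 * n - 1 - i → l ∉ (T.colWord c).drop m := fun l hl h => by
        have := hcross _ hv l h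
        simp only [Letter.idx_inr] at this
        omega
      rw [wgap_eq_of_nodup (colWord_nodup.sublist (List.drop_sublist m _)) hi,
        if_neg (hnot _ (by simp only [Letter.idx_inl]; omega)),
        if_neg (hnot _ (by simp only [Letter.idx_inr]; omega)),
        if_neg (hnot _ (by simp only [Letter.idx_inl]; omega)), if_neg (hnot _ le_rfl)]
      simp
    rw [← hsplit, wgap_append, hs, add_zero, hsplit]
    exact le_max_right _ _
  · refine le_max_of_le_left ?_
    have hu : Sum.inl ⟨i + 1, hi⟩ ∈ (T.colWord c).take m →
        Sum.inl ⟨i, Nat.lt_of_succ_lt hi⟩ ∈ (T.colWord c).take m := fun h => by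
      have hu := mem_colWord_inl_of_inl_succ hrr hi (List.mem_of_mem_take h)
      rw [← hsplit, List.mem_append] at hu
      exact hu.resolve_right fun h' => by simpa using hcross _ h _ h'
    rw [wgap_eq_of_nodup hq hi]
    split_ifs <;> simp_all

def suffixCount (T : SSYT n) (l : Letter n) (x : ℕ) : ℕ :=
  #{c ∈ Ico x (T.rowLen 0) | l ∈ T.colWord c}

theorem suffixCount_eq_sum_count {S : Finset ℕ}
    (hS : ∀ r c, T.entry r c = some l → (x ≤ c ↔ r ∈ S)) :
    T.suffixCount l x = ∑ r ∈ S, T.count l r := by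
  have hdisj : (S : Set ℕ).PairwiseDisjoint
      fun r => {c ∈ range (T.rowLen r) | T.entry r c = some l} := by
    intro r _ r' _ hrr'
    refine Finset.disjoint_left.2 fun c hc hc' => ?_
    simp only [Finset.mem_filter] at hc hc'
    rcases lt_or_gt_of_ne hrr' with h | h
    · exact (T.cols_strict _ _ c l l h hc.2 hc'.2).false
    · exact (T.cols_strict _ _ c l l h hc'.2 hc.2).false
  rw [suffixCount, show ∑ r ∈ S, T.count l r = _ from (Finset.card_biUnion hdisj).symm]
  congr 1
  ext c
  simp only [Finset.mem_filter, Finset.mem_Ico, mem_colWord, Finset.mem_biUnion, Finset.mem_range]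
  constructor
  · rintro ⟨⟨hxc, -⟩, r, h⟩
    exact ⟨r, (hS r c h).1 hxc, lt_rowLen_of_entry h, h⟩
  · rintro ⟨r, hr, hc, h⟩
    exact ⟨⟨(hS r c h).2 hr, hc.trans_le (rowLen_antitone r.zero_le)⟩, r, h⟩

theorem suffixCount_inl (hrr : RowRestriction T) {j : ℕ} (hj : j < n) (x : ℕ) :
    T.suffixCount (Sum.inl ⟨j, hj⟩) x = T.count (Sum.inl ⟨j, hj⟩) j - x := by
  have hle : T.count (Sum.inl ⟨j, hj⟩) j ≤ T.rowLen 0 :=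
    count_le_rowLen.trans (rowLen_antitone j.zero_le)
  simp only [suffixCount, mem_colWord_inl_iff hrr hj, Finset.Ico_filter_lt, Nat.card_Ico,
    min_eq_right hle]

def suffixGap (T : SSYT n) (i x : ℕ) : ℤ :=
  ∑ c ∈ Ico x (T.rowLen 0), wgap i (T.colWord c)

theorem wgap_take_cols (a : ℕ) :
    wgap i (T.cols.take a).flatten = T.suffixGap i (T.rowLen 0 - a) := by
  rw [wgap_flatten, cols, ← List.map_take, List.map_map, List.sum_map_take_reverse_range]
  rfl

theorem suffixGap_eq (hi : i + 1 < n) (x : ℕ) :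
    T.suffixGap i x = (T.suffixCount (Sum.inl ⟨i + 1, hi⟩) x : ℤ)
      - T.suffixCount (Sum.inr ⟨i + 1, hi⟩) x - T.suffixCount (Sum.inl ⟨i, Nat.lt_of_succ_lt hi⟩) x
      + T.suffixCount (Sum.inr ⟨i, Nat.lt_of_succ_lt hi⟩) x := by
  simp only [suffixGap, wgap_eq_of_nodup colWord_nodup hi, Finset.sum_add_distrib,
    Finset.sum_sub_distrib, Finset.sum_boole, suffixCount]

def slack (T : SSYT n) (i l : ℕ) (hi : i + 1 < n) : ℤ :=
  (T.count (Sum.inl ⟨i, Nat.lt_of_succ_lt hi⟩) i : ℤ) -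
    (T.count (Sum.inl ⟨i + 1, hi⟩) (i + 1) : ℤ) -
    ∑ k ∈ Finset.Icc i l,
      ((T.count (Sum.inr ⟨i, Nat.lt_of_succ_lt hi⟩) k : ℤ) -
        (T.count (Sum.inr ⟨i + 1, hi⟩) (k - 1) : ℤ))

theorem slack_self (hrr : RowRestriction T) (hi : i + 1 < n) :
    T.slack i i hi = (T.count (Sum.inl ⟨i, Nat.lt_of_succ_lt hi⟩) i : ℤ)
      - T.count (Sum.inl ⟨i + 1, hi⟩) (i + 1) := by
  rw [slack, Finset.Icc_self, Finset.sum_singleton, count_inr_eq_zero hrr le_rfl,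
    count_inr_eq_zero hrr (show i - 1 ≤ i + 1 by omega)]
  simp

theorem slack_succ (hi : i + 1 < n) {l : ℕ} (hl : i ≤ l) :
    T.slack i (l + 1) hi = T.slack i l hi - T.count (Sum.inr ⟨i, Nat.lt_of_succ_lt hi⟩) (l + 1)
      + T.count (Sum.inr ⟨i + 1, hi⟩) l := by
  rw [slack, slack, Finset.sum_Icc_succ_top (by omega), Nat.add_sub_cancel]
  ring

/-- The `ī` in the columns `≥ x` are those of the rows `≤ r`, and the `(i+1)‾` there are those of
the rows `< r`. -/
theorem suffixGap_eq_sub_slack (hrr : RowRestriction T) (hi : i + 1 < n)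
    (hx : T.entry r x = some (Sum.inr ⟨i, Nat.lt_of_succ_lt hi⟩))
    (hxmin : ∀ c < x, T.entry r c ≠ some (Sum.inr ⟨i, Nat.lt_of_succ_lt hi⟩)) :
    T.suffixGap i x = ((x - T.count (Sum.inl ⟨i + 1, hi⟩) (i + 1) : ℕ) : ℤ) - T.slack i r hi := by
  have hir : i < r := val_lt_of_entry_eq_inr hrr hx
  have hv : T.suffixCount (Sum.inr ⟨i, Nat.lt_of_succ_lt hi⟩) x =
      ∑ k ∈ Icc i r, T.count (Sum.inr ⟨i, Nat.lt_of_succ_lt hi⟩) k := by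
    refine suffixCount_eq_sum_count fun r' c' h' => ?_
    have : i < r' := val_lt_of_entry_eq_inr hrr h'
    simp only [Finset.mem_Icc]
    constructor
    · intro hxc
      by_contra! hr'
      exact absurd (col_lt_of_row_lt hx h' (by omega)) (by omega)
    · rintro ⟨-, hr'⟩
      rcases hr'.eq_or_lt with rfl | hr'
      · by_contra! hc
        exact hxmin c' hc h'
      · exact (col_lt_of_row_lt h' hx hr').le
  have hv₁ : T.suffixCount (Sum.inr ⟨i + 1, hi⟩) x =
      ∑ k ∈ Ico i r, T.count (Sum.inr ⟨i + 1, hi⟩) k := by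
    refine suffixCount_eq_sum_count fun r' c' h' => ?_
    have : i + 1 < r' := val_lt_of_entry_eq_inr hrr h'
    simp only [Finset.mem_Ico]
    constructor
    · intro hxc
      refine ⟨by omega, ?_⟩
      by_contra! hr'
      have := idx_le_of_entry hx h' hr' hxc
      simp only [Letter.idx_inr] at this
      omega
    · rintro ⟨-, hr'⟩
      exact le_col_of_leftmost hx hxmin h' hr' (by simp only [Letter.idx_inr]; omega)
  have hshift := Finset.sum_Icc_sub_one (fun k => (T.count (Sum.inr ⟨i + 1, hi⟩) k : ℤ)) hir.le
  rw [count_inr_eq_zero hrr (show i - 1 ≤ i + 1 by omega)] at hshift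
  have hxa : x < T.count (Sum.inl ⟨i, Nat.lt_of_succ_lt hi⟩) i := lt_count_of_entry_eq_inr hrr hx
  rw [suffixGap_eq hi, suffixCount_inl hrr hi, suffixCount_inl hrr (Nat.lt_of_succ_lt hi), hv,
    hv₁, slack, Finset.sum_sub_distrib, hshift]
  push_cast
  omega

theorem exists_word_eq_append_colWord_zero (hC : 0 < T.rowLen 0) :
    ∃ w, T.word = w ++ T.colWord 0 := by
  obtain ⟨C, hC⟩ := Nat.exists_eq_add_of_lt hC
  refine ⟨((List.range C).map Nat.succ).reverse.flatMap T.colWord, ?_⟩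
  rw [word_eq_flatten_cols, cols, hC, zero_add, List.range_succ_eq_map, List.reverse_cons,
    List.map_append, List.flatten_append, List.flatMap_def]
  simp

theorem exists_colWord_eq_append (he : T.entry r c = some l) (hr : T.rowLen (r + 1) = 0) :
    ∃ w, T.colWord c = w ++ [l] := by
  have h2n : r + 1 ≤ 2 * n := row_lt_of_entry he
  refine ⟨(List.range r).filterMap (T.entry · c), ?_⟩
  have hnil : ((List.range (2 * n - (r + 1))).map (r + 1 + ·)).filterMap (T.entry · c) = [] :=
    List.filterMap_eq_nil_iff.2 fun r' hr' => by
      obtain ⟨a, -, rfl⟩ := List.mem_map.1 hr'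
      refine Option.eq_none_iff_forall_ne_some.2 fun m hm => ?_
      have := row_lt_of_entry_of_rowLen_eq_zero hr hm
      omega
  rw [colWord, ← Nat.add_sub_of_le h2n, List.range_add, List.filterMap_append, hnil,
    List.range_succ, List.filterMap_append]
  simp [he]

theorem rowLen_eq_zero (hrr : RowRestriction T) (hc : Cancel T.word) : T.rowLen n = 0 := by
  classical
  by_contra hpos
  have hex : ∃ m, T.rowLen m = 0 := ⟨2 * n, T.rows_bounded _ le_rfl⟩
  obtain ⟨m, hm⟩ : ∃ m, Nat.find hex = m + 1 :=
    Nat.exists_eq_add_one_of_ne_zero fun h0 => by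
      have := h0 ▸ Nat.find_spec hex
      have := rowLen_antitone (T := T) n.zero_le
      omega
  have hm0 : T.rowLen (m + 1) = 0 := hm ▸ Nat.find_spec hex
  obtain ⟨l, hl⟩ := exists_entry_of_lt_rowLen
    (Nat.pos_of_ne_zero (Nat.find_min hex (show m < Nat.find hex by omega)))
  have hmn : n ≤ m := by
    by_contra! h
    exact hpos (Nat.eq_zero_of_le_zero (hm0 ▸ rowLen_antitone (show m + 1 ≤ n by omega)))
  obtain ⟨k, -, rfl⟩ := (entry_cases hrr hl).resolve_left fun ⟨h, _⟩ => by omega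
  obtain ⟨w, hw⟩ := exists_colWord_eq_append hl hm0
  obtain ⟨w', hw'⟩ := exists_word_eq_append_colWord_zero
    ((lt_rowLen_of_entry hl).trans_le (rowLen_antitone m.zero_le))
  rw [hw', hw, ← List.append_assoc] at hc
  exact Cancel.not_append_inr hc

theorem wsum_succ_le_of_le (hrr : RowRestriction T) (hn : T.rowLen n = 0)
    {j : ℕ} (hj : n ≤ j + 1) {w : List (Letter n)} (hw : ∀ l ∈ w, l ∈ T.word) :
    wsum w (j + 1) ≤ wsum w j := by
  rw [wsum_eq_zero_of_le w hj]
  refine List.sum_nonneg fun z hz => ?_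
  obtain ⟨l, hl, rfl⟩ := List.mem_map.1 hz
  obtain ⟨r, c, he⟩ := exists_entry_of_mem_word (hw l hl)
  rcases l with k | k
  · simp only [wt]
    split_ifs <;> omega
  · have hkr := val_lt_of_entry_eq_inr hrr he
    have hrn := row_lt_of_entry_of_rowLen_eq_zero hn he
    simp only [wt]
    split_ifs <;> omega

theorem suffixGap_nonpos_of_dominant (hdom : Dominant T.word) (hx : x ≤ T.rowLen 0) :
    T.suffixGap i x ≤ 0 := by
  have := hdom (T.cols.take (T.rowLen 0 - x)).flatten.length i
  rw [take_word_eq_flatten_take_cols] at this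
  rw [← Nat.sub_sub_self hx, ← wgap_take_cols, wgap]
  omega

theorem slack_nonneg_of_dominant (hrr : RowRestriction T) (hdom : Dominant T.word)
    (hi : i + 1 < n) {l : ℕ} (hl : i ≤ l) : 0 ≤ T.slack i l hi := by
  induction l, hl using Nat.le_induction with
  | base =>
    rw [slack_self hrr]
    have := count_inl_succ_le hrr hi
    omega
  | succ l hil ih =>
    by_cases h0 : T.count (Sum.inr ⟨i, Nat.lt_of_succ_lt hi⟩) (l + 1) = 0
    · rw [slack_succ hi hil, h0]
      omega
    · obtain ⟨c, hc⟩ := count_ne_zero_iff.1 h0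
      obtain ⟨x, -, hx, hxmin⟩ := exists_leftmost_entry hc
      have := suffixGap_eq_sub_slack hrr hi hx hxmin
      have := suffixGap_nonpos_of_dominant (i := i) hdom
        ((lt_rowLen_of_entry hx).trans_le (rowLen_antitone (l + 1).zero_le)).le
      omega

theorem suffixGap_nonpos_of_count_le (hrr : RowRestriction T) (hi : i + 1 < n)
    (hc : T.count (Sum.inl ⟨i + 1, hi⟩) (i + 1) ≤ c) : T.suffixGap i c ≤ 0 :=
  Finset.sum_nonpos fun c' hc' => wgap_colWord_nonpos hrr hi <| Or.inr <| by
    rw [mem_colWord_inl_iff hrr hi]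
    exact fun h => by simp only [Finset.mem_Ico] at hc'; omega

theorem suffixGap_nonpos (hrr : RowRestriction T) (hn : T.rowLen n = 0)
    (hi : i + 1 < n) (hslack : ∀ l, i ≤ l → l < n → 0 ≤ T.slack i l hi) (c : ℕ) :
    T.suffixGap i c ≤ 0 := by
  set b := T.count (Sum.inl ⟨i + 1, hi⟩) (i + 1)
  have hbC : b ≤ T.rowLen 0 := count_le_rowLen.trans (rowLen_antitone (i + 1).zero_le)
  induction hd : b - c using Nat.strong_induction_on generalizing c with
  | _ d ih =>
    rcases le_or_gt b c with hbc | hcb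
    · exact suffixGap_nonpos_of_count_le hrr hi hbc
    by_cases hv : Sum.inr ⟨i, Nat.lt_of_succ_lt hi⟩ ∈ T.colWord c
    · obtain ⟨r, hr⟩ := mem_colWord.1 hv
      obtain ⟨x, hxc, hx, hxmin⟩ := exists_leftmost_entry hr
      have hrn := row_lt_of_entry_of_rowLen_eq_zero hn hr
      have hblock : 0 ≤ ∑ c' ∈ Ico x c, wgap i (T.colWord c') :=
        Finset.sum_nonneg fun c' hc' => by
          simp only [Finset.mem_Ico] at hc'
          exact wgap_colWord_nonneg hrr hi
            (mem_colWord.2 ⟨r, entry_eq_of_le_of_le hx hr hc'.1 hc'.2.le⟩)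
      have hsplit : T.suffixGap i x = ∑ c' ∈ Ico x c, wgap i (T.colWord c') + T.suffixGap i c :=
        (Finset.sum_Ico_consecutive _ hxc (show c ≤ T.rowLen 0 by omega)).symm
      have hGx : T.suffixGap i x = -T.slack i r hi := by
        rw [suffixGap_eq_sub_slack hrr hi hx hxmin, Nat.sub_eq_zero_of_le (hxc.trans hcb.le)]
        simp
      linarith [hslack r (val_lt_of_entry_eq_inr hrr hx).le hrn]
    · have := wgap_colWord_nonpos hrr hi (Or.inl hv)
      have := ih (b - (c + 1)) (by omega) (c + 1) rfl
      rw [suffixGap, Finset.sum_eq_sum_Ico_succ_bot (by omega)]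
      exact add_nonpos ‹_› this

theorem wgap_take_word_nonpos (hrr : RowRestriction T) (hn : T.rowLen n = 0)
    (hi : i + 1 < n) (hslack : ∀ l, i ≤ l → l < n → 0 ≤ T.slack i l hi) (k : ℕ) :
    wgap i (T.word.take k) ≤ 0 := by
  rw [word_eq_flatten_cols]
  simpa using List.take_flatten_nonpos (wgap i) (wgap_append i) T.cols 0
    (fun a => by simpa [wgap_take_cols] using suffixGap_nonpos hrr hn hi hslack _)
    (fun B hB m => by
      obtain ⟨c, -, rfl⟩ := List.mem_map.1 hB
      exact wgap_take_colWord_le hrr hi m) k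

end SSYT

open SSYT in
theorem dominant_iff_inequalities_general (n : ℕ) (T : SSYT n)
    (hrr : RowRestriction T) (hc : Cancel T.word) :
    Dominant T.word ↔
      ∀ (i l : ℕ) (hi : i + 1 < n), i ≤ l → l < n →
        0 ≤ (T.count (Sum.inl ⟨i, Nat.lt_of_succ_lt hi⟩) i : ℤ) -
            (T.count (Sum.inl ⟨i + 1, hi⟩) (i + 1) : ℤ) -
            ∑ k ∈ Finset.Icc i l,
              ((T.count (Sum.inr ⟨i, Nat.lt_of_succ_lt hi⟩) k : ℤ) -
                (T.count (Sum.inr ⟨i + 1, hi⟩) (k - 1) : ℤ)) := by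
  have hn := rowLen_eq_zero hrr hc
  refine ⟨fun hdom i l hi hil _ => slack_nonneg_of_dominant hrr hdom hi hil, fun hslack k j => ?_⟩
  rcases lt_or_ge (j + 1) n with hj | hj
  · exact sub_nonpos.1 (wgap_take_word_nonpos hrr hn hj (fun l => hslack j l hj) k)
  · exact wsum_succ_le_of_le hrr hn hj fun l hl => List.mem_of_mem_take hl

/-- Prop. `dominanceinequalitiesdomres`: a semi-standard tableau of
shape `λ` and content `μ` satisfying the row-entry restriction and the cancellation
property has dominant word (i.e. lies in `domres(λ,μ)`) iff for all `1 ≤ i ≤ n-1`,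
`i ≤ l ≤ n` (here 0-indexed: `i+1 < n`, `i ≤ l < n`):
`(i,i) − (i+1,i+1) − ∑_{k=i}^{l} [(ī,k) − ((i+1)‾,k−1)] ≥ 0`. -/
theorem dominant_iff_inequalities (n : ℕ) (lam mu : ℕ → ℕ) (T : SSYT n)
    (hshape : T.rowLen = lam) (hwt : ∀ j, wsum T.word j = (mu j : ℤ))
    (hrr : RowRestriction T) (hc : Cancel T.word) :
    Dominant T.word ↔
      ∀ (i l : ℕ) (hi : i + 1 < n), i ≤ l → l < n →
        0 ≤ (T.count (Sum.inl ⟨i, Nat.lt_of_succ_lt hi⟩) i : ℤ) -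
            (T.count (Sum.inl ⟨i + 1, hi⟩) (i + 1) : ℤ) -
            ∑ k ∈ Finset.Icc i l,
              ((T.count (Sum.inr ⟨i, Nat.lt_of_succ_lt hi⟩) k : ℤ) -
                (T.count (Sum.inr ⟨i + 1, hi⟩) (k - 1) : ℤ)) :=
  dominant_iff_inequalities_general n T hrr hc
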